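/- Any two distinct extensions of a default theory are incomparable under set inclusion: if E and E′ are both extensions of (W,D) and E ⊆ E′, then E = E′. -/

import Mathlib

/-- Propositional formulas over natural-number atoms. -/
inductive PForm where
  | atom : ℕ → PForm
  | neg : PForm → PForm
  | conj : PForm → PForm → PForm
  | disj : PForm → PForm → PForm
deriving DecidableEq

/-- Satisfaction of a formula under a valuation. -/
def PForm.sat (v : ℕ → Prop) : PForm → Prop
  | .atom n => v n
  | .neg f => ¬ f.sat v
  | .conj f g => f.sat v ∧ g.sat v
  | .disj f g => f.sat v ∨ g.sat v

/-- Propositional deductive closure (semantic consequence). -/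
def Th (S : Set PForm) : Set PForm :=
  {φ | ∀ v : ℕ → Prop, (∀ ψ ∈ S, ψ.sat v) → φ.sat v}

/-- Propositional entailment `S ⊢ φ`. -/
def Entails (S : Set PForm) (φ : PForm) : Prop := φ ∈ Th S

/-- A default rule (α : β₁,…,βₙ / γ). -/
structure DRule where
  prereq : PForm
  justifs : List PForm
  conseq : PForm

/-- Consequents of a set of defaults. -/
def Conseq (Δ : Set DRule) : Set PForm := DRule.conseq '' Δ

/-- The defining properties of Γ(S): `T` contains `W`, is deductively closed,
and is closed under defaults applicable w.r.t. `S`. -/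
def GammaClosed (W : Set PForm) (D : Set DRule) (S T : Set PForm) : Prop :=
  W ⊆ T ∧ Th T = T ∧
  ∀ δ ∈ D, δ.prereq ∈ T → (∀ β ∈ δ.justifs, PForm.neg β ∉ S) → δ.conseq ∈ T

/-- Γ(S): the smallest set satisfying `GammaClosed`. -/
def Gamma (W : Set PForm) (D : Set DRule) (S : Set PForm) : Set PForm :=
  ⋂₀ {T | GammaClosed W D S T}

/-- Reiter extension: fixed point of Γ. -/
def IsExtension (W : Set PForm) (D : Set DRule) (E : Set PForm) : Prop :=
  Gamma W D E = E

/-- Generating default set of `E`. -/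
def GD (W : Set PForm) (D : Set DRule) (E : Set PForm) : Set DRule :=
  {δ ∈ D | δ.prereq ∈ E ∧ ∀ β ∈ δ.justifs, PForm.neg β ∉ E}

/-- Groundedness of a (finite) set of defaults. -/
def Grounded (W : Set PForm) (Δ : Set DRule) : Prop :=
  ∃ L : List DRule, L.Nodup ∧ {δ | δ ∈ L} = Δ ∧
    ∀ i (h : i < L.length),
      Entails (W ∪ Conseq {δ | δ ∈ L.take i}) (L.get ⟨i, h⟩).prereq

theorem GammaClosed.mono_left {W : Set PForm} {D : Set DRule} {S S' T : Set PForm}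
    (hT : GammaClosed W D S T) (hS : S ⊆ S') : GammaClosed W D S' T :=
  ⟨hT.1, hT.2.1, fun δ hδ hpre hjust =>
    hT.2.2 δ hδ hpre fun β hβ hneg => hjust β hβ (hS hneg)⟩

theorem Gamma_antitone (W : Set PForm) (D : Set DRule) : Antitone (Gamma W D) :=
  fun _ _ hS => Set.sInter_subset_sInter fun _ hT => GammaClosed.mono_left hT hS

theorem extensions_incomparable
    (W : Set PForm) (D : Set DRule) (E E' : Set PForm)
    (hE : IsExtension W D E) (hE' : IsExtension W D E')
    (hsub : E ⊆ E') : E = E' :=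
  hsub.antisymm <| calc
    E' = Gamma W D E' := hE'.symm
    _ ⊆ Gamma W D E := Gamma_antitone W D hsub
    _ = E := hE
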